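/- arXiv:2506.15457 — 2 statements merged into one kernel-verified Lean document; each statement's English description precedes it below -/
import Mathlib

section
/- Let $K \neq \partial\Delta^{m-1}$ be an $(n-1)$-dimensional Gorenstein* complex on $m$ vertices over a field $k$, with Stanley–Reisner ring $k[K]$ such that $I_K$ is generated in degree $d$ and satisfies condition $N_{d,m-n-1}$ (almost linear resolution). Then $n = 2d-2$, and the only nonzero graded Betti numbers of $k[K]$ are $\beta_{0,0} = 1$, $\beta_{i,i+d-1}$ for $1 \leq i \leq m-n-1$, and $\beta_{m-n,m} = 1$. -/
/-!
Duality sends the generator bidegree `(1, d)` to `(m - n - 1, m - d)`, which lies in homological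
degree `m - n - 1`, still inside the linear range; so `m - d = (m - n - 1) + d - 1`, i.e.
`n = 2d - 2`. The list of nonzero Betti numbers is then read off homological degree by degree.
-/

theorem two_mul_sub_two_eq_of_betti_dual_linear (β : ℕ → ℕ → ℕ) {m n d : ℕ}
    (hproj : 1 < m - n)
    (hpd : ∀ i j, i ≤ m - n → j ≤ m → β i j = β (m - n - i) (m - j))
    (hreg : ∀ i j, n + i < j → β i j = 0)
    (hgen : β 1 d ≠ 0)
    (hlin : ∀ i j, 1 ≤ i → i ≤ m - n - 1 → β i j ≠ 0 → j = i + d - 1) :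
    n = 2 * d - 2 := by
  have hdn : d ≤ n + 1 := by
    by_contra h
    exact hgen (hreg 1 d (by omega))
  have hdual : β (m - n - 1) (m - d) ≠ 0 := by
    rwa [← hpd 1 d (by omega) (by omega)]
  have hlinear : m - d = m - n - 1 + d - 1 := hlin _ _ (by omega) le_rfl hdual
  omega

theorem betti_ne_zero_cases (β : ℕ → ℕ → ℕ) {m p d : ℕ}
    (hβ0' : ∀ j, j ≠ 0 → β 0 j = 0)
    (htop' : ∀ j, j ≠ m → β p j = 0)
    (hpdim : ∀ i j, p < i → β i j = 0)
    (hlin : ∀ i j, 1 ≤ i → i ≤ p - 1 → β i j ≠ 0 → j = i + d - 1)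
    {i j : ℕ} (hij : β i j ≠ 0) :
    (i = 0 ∧ j = 0) ∨ (1 ≤ i ∧ i ≤ p - 1 ∧ j = i + d - 1) ∨ (i = p ∧ j = m) := by
  rcases Nat.eq_zero_or_pos i with rfl | hi
  · exact Or.inl ⟨rfl, not_imp_comm.mp (hβ0' j) hij⟩
  by_cases hlow : i ≤ p - 1
  · exact Or.inr (Or.inl ⟨hi, hlow, hlin i j hi hlow hij⟩)
  obtain rfl : i = p := by
    by_contra hip
    exact hij (hpdim i j (by omega))
  exact Or.inr (Or.inr ⟨rfl, not_imp_comm.mp (htop' j) hij⟩)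

theorem stmt7_general
    (m n d : ℕ)
    (β : ℕ → ℕ → ℕ)  -- β i j = dim_k Tor^S_i(k[K], k)_j
    -- K ≠ ∂Δ^{m-1} and K Gorenstein*, hence projdim_S k[K] = m - n > 1
    (hproj : 1 < m - n)
    -- β 0 0 = 1 is the only Betti number in homological degree 0
    (hβ0' : ∀ j, j ≠ 0 → β 0 j = 0)
    -- the top Betti number: β (m-n) m = 1, corresponding to Tor_{m-n}(k[K],k)_m ≅ H̃^{n-1}(K;k)
    (htop' : ∀ j, j ≠ m → β (m - n) j = 0)
    -- Poincaré duality of Betti numbers coming from Gorensteinness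
    (hpd : ∀ i j, i ≤ m - n → j ≤ m → β i j = β (m - n - i) (m - j))
    -- Castelnuovo–Mumford regularity of k[K] equals n
    (hreg : ∀ i j, n + i < j → β i j = 0)
    -- projective dimension m - n
    (hpdim : ∀ i j, m - n < i → β i j = 0)
    -- I_K is generated in degree d (so β_{i,j}(k[K]) = 0 for j < i + d - 1 when i ≥ 1)
    (hgen : β 1 d ≠ 0)
    -- condition N_{d, m-n-1} for I_K: the resolution of I_K is linear in the first
    -- m - n - 1 steps, i.e. β_{i,j}(k[K]) = 0 for j ≠ i + d - 1 whenever 1 ≤ i ≤ m - n - 1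
    (hlin : ∀ i j, 1 ≤ i → i ≤ m - n - 1 → β i j ≠ 0 → j = i + d - 1) :
    n = 2 * d - 2 ∧
      ∀ i j, β i j ≠ 0 →
        (i = 0 ∧ j = 0) ∨ (1 ≤ i ∧ i ≤ m - n - 1 ∧ j = i + d - 1) ∨ (i = m - n ∧ j = m) :=
  ⟨two_mul_sub_two_eq_of_betti_dual_linear β hproj hpd hreg hgen hlin,
    fun _ _ => betti_ne_zero_cases β hβ0' htop' hpdim hlin⟩

theorem stmt7
    (m n d : ℕ)
    (β : ℕ → ℕ → ℕ)  -- β i j = dim_k Tor^S_i(k[K], k)_j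
    (hn : 1 ≤ n) (hd : 1 ≤ d)
    (hnm : n < m)
    -- K ≠ ∂Δ^{m-1} and K Gorenstein*, hence projdim_S k[K] = m - n > 1
    (hproj : 1 < m - n)
    -- β 0 0 = 1 is the only Betti number in homological degree 0
    (hβ0 : β 0 0 = 1) (hβ0' : ∀ j, j ≠ 0 → β 0 j = 0)
    -- the top Betti number: β (m-n) m = 1, corresponding to Tor_{m-n}(k[K],k)_m ≅ H̃^{n-1}(K;k)
    (htop : β (m - n) m = 1) (htop' : ∀ j, j ≠ m → β (m - n) j = 0)
    -- Poincaré duality of Betti numbers coming from Gorensteinness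
    (hpd : ∀ i j, i ≤ m - n → j ≤ m → β i j = β (m - n - i) (m - j))
    -- Castelnuovo–Mumford regularity of k[K] equals n
    (hreg : ∀ i j, n + i < j → β i j = 0)
    -- projective dimension m - n
    (hpdim : ∀ i j, m - n < i → β i j = 0)
    -- I_K is generated in degree d (so β_{i,j}(k[K]) = 0 for j < i + d - 1 when i ≥ 1)
    (hmind : ∀ i j, 1 ≤ i → j < i + d - 1 → β i j = 0)
    (hgen : β 1 d ≠ 0)
    (hgen' : ∀ j, j ≠ d → β 1 j = 0)
    -- condition N_{d, m-n-1} for I_K: the resolution of I_K is linear in the first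
    -- m - n - 1 steps, i.e. β_{i,j}(k[K]) = 0 for j ≠ i + d - 1 whenever 1 ≤ i ≤ m - n - 1
    (hlin : ∀ i j, 1 ≤ i → i ≤ m - n - 1 → β i j ≠ 0 → j = i + d - 1) :
    n = 2 * d - 2 ∧
      ∀ i j, β i j ≠ 0 →
        (i = 0 ∧ j = 0) ∨ (1 ≤ i ∧ i ≤ m - n - 1 ∧ j = i + d - 1) ∨ (i = m - n ∧ j = m) :=
  stmt7_general m n d β hproj hβ0' htop' hpd hreg hpdim hgen hlin
end

section
/- Let $K$ be a simplicial complex on $[m]$ with no ghost vertices. For each subset $U \subseteq [m]$ the assignment $v_I \lambda_{U \smallsetminus I} \mapsto (-1)^{\varepsilon(I,U)} I$, where $\varepsilon(I,U) = |\{(i,u) \in I \times U : i > u\}|$, defines an isomorphism of chain complexes from the squarefree co-Koszul complex component $R^*(K)_U = \mathrm{span}\{v_I\lambda_J : I \in K,\; I \sqcup J = U\}$ (with differential $\partial(v_I\lambda_J) = \sum_{i\in I} v_{I\smallsetminus i}\lambda_i\wedge\lambda_J$) to the augmented simplicial chain complex $\widetilde{C}_{|U|+*-1}(K_U;k)$ of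 the full subcomplex $K_U$, where $\widetilde{C}_{-1}(\varnothing;k) = k$. -/
/-!
The map `PhiMap` only rescales each coordinate by the sign `(-1)^{ε(I,U)}`, which squares to `1`,
so it is a linear isomorphism. It commutes with the differentials because adding a vertex `v`
to a face `t ⊆ U` changes `ε(t,U)` by `#{u ∈ U : u < v}`, and this count is the sum of the exponent
`#{u ∈ t : u < v}` of the simplicial boundary and the exponent `#{u ∈ U ∖ (t ∪ v) : u < v}` of the
co-Koszul differential.
-/

open Finset

section

variable (m : ℕ) (k : Type) [CommRing k]
variable (isFace : Finset (Fin m) → Prop) [DecidablePred isFace]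
variable (U : Finset (Fin m))

/-- Basis of `R^i(K)_U`: pairs `v_I λ_J` with `I ∈ K`, `I ⊔ J = U`, `|J| = i`;
such a pair is determined by the face `I ⊆ U` with `(U \ I).card = i`. -/
def RIdx (i : ℕ) :=
  {I : Finset (Fin m) // isFace I ∧ I ⊆ U ∧ (U \ I).card = i}

/-- Basis of the augmented chain complex `C̃(K_U; k)`, indexed complementarily:
faces `s` of `K_U` with `s.card + i = U.card` (so `s` lies in chain degree
`|U| - i - 1`). -/
def CIdx (i : ℕ) :=
  {s : Finset (Fin m) // isFace s ∧ s ⊆ U ∧ s.card + i = U.card}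

/-- The sign `(-1)^{ε(s,U)}` with `ε(s,U) = #{(i,u) ∈ s × U : i > u}`. -/
def epsSign (s : Finset (Fin m)) : k :=
  (-1 : k) ^ (∑ x ∈ s, (U.filter (· < x)).card)

variable {m U}

/-- The co-Koszul differential `∂(v_I λ_J) = ∑_{x ∈ I} v_{I∖x} λ_x ∧ λ_J`, written in the
coordinates of the basis `RIdx`. -/
def dR (i : ℕ) (φ : RIdx m isFace U i → k) : RIdx m isFace U (i + 1) → k :=
  fun I' => ∑ v ∈ (U \ I'.1).attach,
    if hf : isFace (insert v.1 I'.1) then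
      ((-1 : k) ^ (((U \ insert v.1 I'.1).filter (· < v.1)).card)) *
        φ ⟨insert v.1 I'.1,
           hf,
           insert_subset (mem_sdiff.mp v.2).1 I'.2.2.1,
           by
             have hv : v.1 ∈ U \ I'.1 := v.2
             have h1 : U \ insert v.1 I'.1 = (U \ I'.1).erase v.1 := by
               rw [Finset.sdiff_insert]
             rw [h1, Finset.card_erase_of_mem hv, I'.2.2.2]; omega⟩
    else 0

/-- The simplicial boundary of the augmented chain complex of `K_U`, in the same
(complementary) indexing. -/
def dC (i : ℕ) (φ : CIdx m isFace U i → k) : CIdx m isFace U (i + 1) → k :=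
  fun t => ∑ v ∈ (U \ t.1).attach,
    if hf : isFace (insert v.1 t.1) then
      ((-1 : k) ^ ((t.1.filter (· < v.1)).card)) *
        φ ⟨insert v.1 t.1,
           hf,
           insert_subset (mem_sdiff.mp v.2).1 t.2.2.1,
           by
             have hv : v.1 ∉ t.1 := (mem_sdiff.mp v.2).2
             rw [Finset.card_insert_of_notMem hv]
             have := t.2.2.2
             omega⟩
    else 0

/-- Hochster's isomorphism `v_I λ_{U∖I} ↦ (-1)^{ε(I,U)} I`. -/
def PhiMap (i : ℕ) (φ : RIdx m isFace U i → k) : CIdx m isFace U i → k :=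
  fun s =>
    epsSign m k U s.1 *
      φ ⟨s.1, s.2.1, s.2.2.1, by
        have h := Finset.card_sdiff_of_subset s.2.2.1
        have h2 := s.2.2.2
        have h3 := Finset.card_le_card s.2.2.1
        omega⟩

end

lemma card_filter_lt_eq_add {α : Type*} [LinearOrder α] {t U : Finset α} (ht : t ⊆ U) (v : α) :
    #(U.filter (· < v)) = #(t.filter (· < v)) + #((U \ insert v t).filter (· < v)) := by
  have hsplit : (U \ insert v t).filter (· < v) = U.filter (· < v) \ t.filter (· < v) := by
    grind
  rw [hsplit, card_sdiff_of_subset (filter_subset_filter _ ht)]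
  have := card_le_card (filter_subset_filter (· < v) ht)
  omega

lemma card_sdiff_eq_iff {α : Type*} [DecidableEq α] {s U : Finset α} (hs : s ⊆ U) (i : ℕ) :
    #(U \ s) = i ↔ #s + i = #U := by
  have := card_sdiff_add_card_eq_card hs
  omega

section

variable {m : ℕ} (k : Type) [CommRing k] (U : Finset (Fin m))

lemma epsSign_mul_epsSign_mul (s : Finset (Fin m)) (a : k) :
    epsSign m k U s * (epsSign m k U s * a) = a := by
  rw [← mul_assoc, epsSign, ← pow_add, (Even.add_self _).neg_one_pow, one_mul]

lemma epsSign_insert {t : Finset (Fin m)} {v : Fin m} (hv : v ∉ t) :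
    epsSign m k U (insert v t) = (-1) ^ #(U.filter (· < v)) * epsSign m k U t := by
  rw [epsSign, sum_insert hv, pow_add, epsSign]

lemma epsSign_mul_neg_one_pow_sdiff_insert {t : Finset (Fin m)} (ht : t ⊆ U) {v : Fin m}
    (hv : v ∉ t) :
    epsSign m k U t * (-1) ^ #((U \ insert v t).filter (· < v)) =
      (-1) ^ #(t.filter (· < v)) * epsSign m k U (insert v t) := by
  rw [epsSign_insert k U hv, card_filter_lt_eq_add ht, ← mul_assoc, ← pow_add, mul_comm,
    neg_one_pow_eq_pow_mod_two, neg_one_pow_eq_pow_mod_two (n := _ + (_ + _))]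
  congr 2
  omega

variable (isFace : Finset (Fin m) → Prop) [DecidablePred isFace]

def faceEquiv (i : ℕ) : RIdx m isFace U i ≃ CIdx m isFace U i :=
  Equiv.subtypeEquivRight fun _ =>
    and_congr_right fun _ => and_congr_right fun hs => card_sdiff_eq_iff hs i

def PhiMap.linearEquiv (i : ℕ) : (RIdx m isFace U i → k) ≃ₗ[k] (CIdx m isFace U i → k) where
  toFun := PhiMap k isFace i
  invFun ψ I := epsSign m k U I.1 * ψ (faceEquiv U isFace i I)
  map_add' _ _ := funext fun _ => mul_add _ _ _
  map_smul' _ _ := funext fun _ => mul_left_comm _ _ _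
  left_inv φ := funext fun I => epsSign_mul_epsSign_mul k U I.1 (φ I)
  right_inv ψ := funext fun s => epsSign_mul_epsSign_mul k U s.1 (ψ s)

theorem PhiMap_dR (i : ℕ) (φ : RIdx m isFace U i → k) :
    PhiMap k isFace (i + 1) (dR k isFace i φ) = dC k isFace i (PhiMap k isFace i φ) := by
  funext t
  simp only [PhiMap, dR, dC, mul_sum]
  refine sum_congr rfl fun v _ => ?_
  split_ifs
  · rw [← mul_assoc, ← mul_assoc,
      epsSign_mul_neg_one_pow_sdiff_insert k U t.2.2.1 (mem_sdiff.mp v.2).2]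
  · rw [mul_zero]

end

theorem stmt9_general (m : ℕ) (k : Type) [CommRing k]
    (isFace : Finset (Fin m) → Prop) [DecidablePred isFace]
    (U : Finset (Fin m)) :
    (∀ i : ℕ, Function.Bijective (PhiMap (m := m) (U := U) k isFace i)) ∧
    (∀ i : ℕ, ∀ φ ψ : RIdx m isFace U i → k,
        PhiMap k isFace i (φ + ψ) = PhiMap k isFace i φ + PhiMap k isFace i ψ) ∧
    (∀ i : ℕ, ∀ (a : k) (φ : RIdx m isFace U i → k),
        PhiMap k isFace i (a • φ) = a • PhiMap k isFace i φ) ∧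
    (∀ i : ℕ, ∀ φ : RIdx m isFace U i → k,
        PhiMap k isFace (i + 1) (dR k isFace i φ) = dC k isFace i (PhiMap k isFace i φ)) :=
  ⟨fun i => (PhiMap.linearEquiv k U isFace i).bijective,
    fun i => (PhiMap.linearEquiv k U isFace i).map_add,
    fun i => (PhiMap.linearEquiv k U isFace i).map_smul,
    PhiMap_dR k U isFace⟩

theorem stmt9 (m : ℕ) (k : Type) [CommRing k]
    (isFace : Finset (Fin m) → Prop) [DecidablePred isFace]
    (hdown : ∀ s t : Finset (Fin m), t ⊆ s → isFace s → isFace t)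
    (hvert : ∀ i : Fin m, isFace {i})
    (U : Finset (Fin m)) :
    (∀ i : ℕ, Function.Bijective (PhiMap (m := m) (U := U) k isFace i)) ∧
    (∀ i : ℕ, ∀ φ ψ : RIdx m isFace U i → k,
        PhiMap k isFace i (φ + ψ) = PhiMap k isFace i φ + PhiMap k isFace i ψ) ∧
    (∀ i : ℕ, ∀ (a : k) (φ : RIdx m isFace U i → k),
        PhiMap k isFace i (a • φ) = a • PhiMap k isFace i φ) ∧
    (∀ i : ℕ, ∀ φ : RIdx m isFace U i → k,
        PhiMap k isFace (i + 1) (dR k isFace i φ) = dC k isFace i (PhiMap k isFace i φ)) :=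
  stmt9_general m k isFace U
end
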